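/- arXiv:2202.07485 — 3 statements merged into one kernel-verified Lean document; each statement's English description precedes it below -/
import Mathlib

section
/- Let n > s ≥ 1 and k be natural numbers. Then (1 - s/n)^k - (1 - s/(n-1))^k ≤ (1 - s/n)^k · k·s / ((n-1)(n-s)). -/
theorem pow_sub_pow_le_pow_mul_one_sub_div {a b : ℝ} (ha : 0 < a) (hb : -a ≤ b) (k : ℕ) :
    a ^ k - b ^ k ≤ a ^ k * (k * (1 - b / a)) := by
  have bernoulli : 1 + k * (b / a - 1) ≤ (b / a) ^ k :=
    one_add_mul_sub_le_pow (by rwa [le_div_iff₀ ha, neg_one_mul]) k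
  have hak : 0 < a ^ k := pow_pos ha k
  rw [div_pow, le_div_iff₀ hak] at bernoulli
  linarith

theorem prob_diff_bound (n s k : ℕ) (hs : 1 ≤ s) (hns : s < n) :
    (1 - (s : ℝ) / n) ^ k - (1 - (s : ℝ) / ((n : ℝ) - 1)) ^ k
      ≤ (1 - (s : ℝ) / n) ^ k * ((k : ℝ) * s / (((n : ℝ) - 1) * ((n : ℝ) - (s : ℝ)))) := by
  have hs' : (1 : ℝ) ≤ s := by exact_mod_cast hs
  have hns' : (s : ℝ) + 1 ≤ n := by exact_mod_cast hns
  have hn : (0 : ℝ) < n := by linarith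
  have hn_sub_one : (0 : ℝ) < n - 1 := by linarith
  have hn_sub_s : (0 : ℝ) < n - s := by linarith
  have ha : 0 < 1 - (s : ℝ) / n := by
    rw [sub_pos, div_lt_one hn]
    linarith
  have hb : 0 ≤ 1 - (s : ℝ) / (n - 1) := by
    rw [sub_nonneg, div_le_one hn_sub_one]
    linarith
  have ratio : 1 - (1 - (s : ℝ) / (n - 1)) / (1 - s / n) = s / ((n - 1) * (n - s)) := by
    rw [one_sub_div hn.ne', one_sub_div hn_sub_one.ne', div_div_div_eq, one_sub_div]
    · congr 1
      ring
    · positivity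
  calc _ ≤ (1 - (s : ℝ) / n) ^ k * (k * (1 - (1 - s / (n - 1)) / (1 - s / n))) :=
        pow_sub_pow_le_pow_mul_one_sub_div ha (by linarith) k
    _ = _ := by rw [ratio, mul_div_assoc]
end

section
/- There exists N ∈ ℕ such that for all n ≥ N and all natural k with k ≤ (n/s)(log n + x + 1), one has (1-s/n)^k + (n-1)·((1-s/n)^k - (1-s/(n-1))^k) ≤ (1-s/n)^k · (1 + 2·k·s/(n-s)). -/
/-! Since `(n - 1) * ((1 - s/n) - (1 - s/(n-1))) = s/n` and `1 - s/n = (n - s)/n`, the mean value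
bound `a ^ k - b ^ k ≤ k a ^ (k-1) (a - b)` for `0 ≤ b ≤ a` turns the difference term into at most
`(1 - s/n) ^ k * k s/(n - s)`. -/

theorem mul_pow_sub_pow_le {R : Type*} [CommRing R] [LinearOrder R] [IsStrictOrderedRing R]
    {a b : R} (hb : 0 ≤ b) (hab : b ≤ a) (k : ℕ) :
    a * (a ^ k - b ^ k) ≤ k * a ^ k * (a - b) := by
  have ha : 0 ≤ a := hb.trans hab
  obtain _ | m := k
  · simp
  have hmv : a ^ (m + 1) - b ^ (m + 1) ≤ (a - b) * (m + 1) * a ^ m := by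
    have h := abs_pow_sub_pow_le a b (m + 1)
    rw [abs_of_nonneg ha, abs_of_nonneg hb, max_eq_left hab, abs_of_nonneg (sub_nonneg.2 hab),
      Nat.add_sub_cancel, Nat.cast_succ] at h
    exact (le_abs_self _).trans h
  calc a * (a ^ (m + 1) - b ^ (m + 1)) ≤ a * ((a - b) * (m + 1) * a ^ m) := by gcongr
    _ = _ := by push_cast; ring

theorem sub_one_mul_one_sub_div_pow_sub_le {s n : ℝ} (hs : 0 ≤ s) (hn : 1 < n)
    (hsn : s ≤ n - 1) (k : ℕ) :
    (n - 1) * ((1 - s / n) ^ k - (1 - s / (n - 1)) ^ k) ≤ (1 - s / n) ^ k * (k * s / (n - s)) := by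
  set a := 1 - s / n with ha_def
  set b := 1 - s / (n - 1) with hb_def
  have hn₀ : 0 < n := by linarith
  have hns : 0 < n - s := by linarith
  have ha : 0 < a := by rw [ha_def, sub_pos, div_lt_one hn₀]; linarith
  have hb : 0 ≤ b := by rw [hb_def, sub_nonneg, div_le_one (by linarith)]; exact hsn
  have hab : b ≤ a := by
    rw [ha_def, hb_def]
    gcongr; linarith
  rw [← mul_le_mul_iff_of_pos_left ha]
  calc a * ((n - 1) * (a ^ k - b ^ k)) = (n - 1) * (a * (a ^ k - b ^ k)) := by ring
    _ ≤ (n - 1) * (k * a ^ k * (a - b)) :=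
      mul_le_mul_of_nonneg_left (mul_pow_sub_pow_le hb hab k) (by linarith)
    _ = a * (a ^ k * (k * s / (n - s))) := by
      rw [ha_def, hb_def]
      field_simp [(by linarith : n - 1 ≠ 0)]
      ring

theorem poisson_error_term_bound_general (s : ℕ) (x : ℝ) :
    ∃ N : ℕ, ∀ n : ℕ, N ≤ n → ∀ k : ℕ,
      (k : ℝ) ≤ ((n : ℝ) / s) * (Real.log n + x + 1) →
      (1 - (s : ℝ) / n) ^ k +
        ((n : ℝ) - 1) * ((1 - (s : ℝ) / n) ^ k - (1 - (s : ℝ) / ((n : ℝ) - 1)) ^ k)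
      ≤ (1 - (s : ℝ) / n) ^ k * (1 + 2 * k * s / ((n : ℝ) - (s : ℝ))) := by
  refine ⟨s + 2, fun n hn k _ => ?_⟩
  have hsn : (s : ℝ) + 2 ≤ n := by exact_mod_cast hn
  have hdiff := sub_one_mul_one_sub_div_pow_sub_le (n := n) (Nat.cast_nonneg s) (by linarith)
    (by linarith) k
  have ha : 0 ≤ 1 - (s : ℝ) / n := by
    rw [sub_nonneg, div_le_one (by linarith)]; linarith
  have hterm : 0 ≤ (1 - (s : ℝ) / n) ^ k * (k * s / (n - s)) :=
    mul_nonneg (pow_nonneg ha k) (div_nonneg (by positivity) (by linarith))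
  calc _ ≤ (1 - (s : ℝ) / n) ^ k + (1 - (s : ℝ) / n) ^ k * (k * s / (n - s)) := by linarith
    _ = (1 - (s : ℝ) / n) ^ k * (1 + 2 * k * s / (n - s))
          - (1 - (s : ℝ) / n) ^ k * (k * s / (n - s)) := by ring
    _ ≤ _ := by linarith

theorem poisson_error_term_bound (s : ℕ) (hs : 1 ≤ s) (x : ℝ) :
    ∃ N : ℕ, ∀ n : ℕ, N ≤ n → ∀ k : ℕ,
      (k : ℝ) ≤ ((n : ℝ) / s) * (Real.log n + x + 1) →
      (1 - (s : ℝ) / n) ^ k +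
        ((n : ℝ) - 1) * ((1 - (s : ℝ) / n) ^ k - (1 - (s : ℝ) / ((n : ℝ) - 1)) ^ k)
      ≤ (1 - (s : ℝ) / n) ^ k * (1 + 2 * k * s / ((n : ℝ) - (s : ℝ))) :=
  poisson_error_term_bound_general s x
end

section
/- Let W be a Poisson random variable with parameter λ > 0 and X a random variable on {0,1,…,n}. If there is a coupling (X, X^s) with X^s having the X-size-biased distribution such that X + 1 − X^s ≥ 0 almost surely and λ = E[X], then d_TV(X, W) ≤ min{1, λ}·E[X + 1 − X^s]. -/
/-!
Stein's method. For `A ⊆ ℕ` let `f` solve the Stein equation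
`λ f(k+1) - k f(k) = 1_A(k) - P(W ∈ A)` with `f 0 = 0`. Evaluating it at `X` and using the
size-bias identity `E[X g(X)] = λ E[g(Xˢ)]` gives `P(X ∈ A) - P(W ∈ A) = λ E[f(X+1) - f(Xˢ)]`,
so, as `Xˢ ≤ X + 1`, it suffices that `|f(k+1) - f(k)| ≤ min(1, 1/λ)`. For this, `f` is the sum
over `j ∈ A` of the solutions for the singletons `{j}`: the increment at `k` of the solution for
`{j}` is `≤ 0` for `j ≠ k` and at most `min(1, 1/λ)` for `j = k`, and the increments of all of
them add up to zero.
-/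

open MeasureTheory ProbabilityTheory Finset
open scoped Nat

lemma abs_tsum_indicator_le {α : Type*} {d : α → ℝ} {a : α} {c : ℝ} (hd : HasSum d 0)
    (hoff : ∀ x ≠ a, d x ≤ 0) (ha : d a ≤ c) (A : Set α) :
    |∑' x, A.indicator d x| ≤ c := by
  classical
  have hsingle : Summable fun x ↦ if x = a then d a else 0 :=
    summable_of_ne_finset_zero (s := {a}) (by simp_all)
  have ha_nonneg : 0 ≤ d a := by
    rw [← hd.tsum_eq, ← tsum_ite_eq a (fun _ ↦ d a)]
    refine hd.summable.tsum_le_tsum (fun x ↦ ?_) hsingle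
    split_ifs with hx
    · rw [hx]
    · exact hoff x hx
  have hset : ∀ B : Set α, ∑' x, B.indicator d x ≤ c := fun B ↦ by
    rw [← tsum_ite_eq a (fun _ ↦ d a)] at ha
    refine le_trans ((hd.summable.indicator B).tsum_le_tsum (fun x ↦ ?_) hsingle) ha
    split_ifs with hx
    · subst hx; exact Set.indicator_le_self' (fun _ _ ↦ ha_nonneg) x
    · exact Set.indicator_apply_le' (fun _ ↦ hoff x hx) fun _ ↦ le_rfl
  -- the lower bound is the upper bound for `Aᶜ`, as the sums over `A` and `Aᶜ` add up to zero
  have hcompl : ∑' x, A.indicator d x + ∑' x, Aᶜ.indicator d x = 0 := by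
    rw [← (hd.summable.indicator A).tsum_add (hd.summable.indicator Aᶜ), ← hd.tsum_eq]
    exact congrArg tsum (A.indicator_self_add_compl d)
  rw [abs_le]
  constructor <;> linarith [hset A, hset Aᶜ]

lemma abs_sub_le_mul_of_abs_succ_sub_le {g : ℕ → ℝ} {c : ℝ} (hg : ∀ k, |g (k + 1) - g k| ≤ c)
    {m M : ℕ} (h : m ≤ M) : |g M - g m| ≤ c * (M - m) := by
  have := dist_le_Ico_sum_of_dist_le (f := g) h (d := fun _ ↦ c)
    (fun _ _ ↦ by rw [Real.dist_eq, abs_sub_comm]; exact hg _)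
  rw [Real.dist_eq, abs_sub_comm, sum_const, Nat.card_Ico, nsmul_eq_mul, Nat.cast_sub h] at this
  linarith

section Discrete

variable {Ω : Type*} [MeasurableSpace Ω] {μ : Measure Ω} {Y : Ω → ℕ}

lemma integrable_comp_of_ae_le [IsFiniteMeasure μ] (hY : Measurable Y) {n : ℕ}
    (hYn : ∀ᵐ ω ∂μ, Y ω ≤ n) (g : ℕ → ℝ) : Integrable (fun ω ↦ g (Y ω)) μ := by
  refine .of_bound (measurable_from_nat.comp hY).aestronglyMeasurable (∑ y ∈ range (n + 1), |g y|)
    (hYn.mono fun ω hω ↦ ?_)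
  exact single_le_sum (f := fun y ↦ |g y|) (fun _ _ ↦ abs_nonneg _)
    (mem_range.2 (Nat.lt_succ_of_le hω))

lemma integral_comp_eq_tsum (hY : Measurable Y) {g : ℕ → ℝ}
    (hg : Integrable (fun ω ↦ g (Y ω)) μ) :
    ∫ ω, g (Y ω) ∂μ = ∑' y, μ.real (Y ⁻¹' {y}) * g y := by
  have hgm : AEStronglyMeasurable g (μ.map Y) := measurable_from_nat.aestronglyMeasurable
  rw [← integral_map hY.aemeasurable hgm,
    integral_countable ((integrable_map_measure hgm hY.aemeasurable).2 hg)]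
  simp [map_measureReal_apply hY (measurableSet_singleton _)]

lemma measureReal_preimage_eq_integral (hY : Measurable Y) (A : Set ℕ) :
    μ.real (Y ⁻¹' A) = ∫ ω, A.indicator 1 (Y ω) ∂μ := by
  rw [← integral_indicator_one (hY .of_discrete)]
  rfl

lemma measureReal_preimage_eq_tsum [IsFiniteMeasure μ] (hY : Measurable Y) (A : Set ℕ) :
    μ.real (Y ⁻¹' A) = ∑' y, A.indicator (fun y ↦ μ.real (Y ⁻¹' {y})) y := by
  have hint : Integrable (fun ω ↦ A.indicator (1 : ℕ → ℝ) (Y ω)) μ :=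
    (integrable_const (1 : ℝ)).indicator (hY .of_discrete)
  rw [measureReal_preimage_eq_integral hY, integral_comp_eq_tsum hY hint]
  congr 1 with y
  by_cases hy : y ∈ A <;> simp [hy]

lemma integral_mul_comp_eq_of_sizeBias {Ys : Ω → ℕ} (hY : Measurable Y) (hYs : Measurable Ys)
    {lam : ℝ} (hlam : lam ≠ 0)
    (hsb : ∀ y : ℕ, μ.real (Ys ⁻¹' {y}) = y * μ.real (Y ⁻¹' {y}) / lam) {g : ℕ → ℝ}
    (hg : Integrable (fun ω ↦ (Y ω : ℝ) * g (Y ω)) μ) (hgs : Integrable (fun ω ↦ g (Ys ω)) μ) :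
    ∫ ω, (Y ω : ℝ) * g (Y ω) ∂μ = lam * ∫ ω, g (Ys ω) ∂μ := by
  rw [integral_comp_eq_tsum (g := fun y ↦ y * g y) hY hg, integral_comp_eq_tsum hYs hgs,
    ← tsum_mul_left]
  congr 1 with y
  rw [hsb]
  field_simp

end Discrete

noncomputable def poissonProb (lam : ℝ) (k : ℕ) : ℝ := Real.exp (-lam) * lam ^ k / k !

/-- `P(W < k)`, with a strict inequality. -/
noncomputable def poissonCdf (lam : ℝ) (k : ℕ) : ℝ := ∑ j ∈ range k, poissonProb lam j

noncomputable def poissonMass (lam : ℝ) (A : Set ℕ) : ℝ := ∑' j, A.indicator (poissonProb lam) j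

section Poisson

variable {lam : ℝ}

lemma poissonProb_pos (hlam : 0 < lam) (k : ℕ) : 0 < poissonProb lam k := by
  unfold poissonProb; positivity

lemma hasSum_poissonProb (hlam : 0 ≤ lam) : HasSum (poissonProb lam) 1 :=
  hasSum_one_poissonMeasure ⟨lam, hlam⟩

lemma succ_mul_poissonProb_succ (k : ℕ) :
    (k + 1) * poissonProb lam (k + 1) = lam * poissonProb lam k := by
  unfold poissonProb
  rw [Nat.factorial_succ]
  push_cast
  field_simp
  ring

lemma one_sub_poissonCdf (hlam : 0 ≤ lam) (k : ℕ) :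
    1 - poissonCdf lam k = ∑' i, poissonProb lam (i + k) := by
  rw [← (hasSum_poissonProb hlam).tsum_eq,
    ← (hasSum_poissonProb hlam).summable.sum_add_tsum_nat_add k, poissonCdf, add_sub_cancel_left]

lemma poissonCdf_le_one (hlam : 0 < lam) (k : ℕ) : poissonCdf lam k ≤ 1 :=
  sum_le_hasSum _ (fun i _ ↦ (poissonProb_pos hlam i).le) (hasSum_poissonProb hlam.le)

lemma poissonCdf_nonneg (hlam : 0 < lam) (k : ℕ) : 0 ≤ poissonCdf lam k :=
  sum_nonneg fun i _ ↦ (poissonProb_pos hlam i).le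

/-- `λ P(W < k) = E[W; W ≤ k] ≤ k P(W ≤ k)`. -/
lemma poissonCdf_div_le (hlam : 0 < lam) (k : ℕ) :
    poissonCdf lam k / k ≤ poissonCdf lam (k + 1) / lam := by
  rcases k.eq_zero_or_pos with rfl | hk
  · simpa [poissonCdf] using div_nonneg (poissonProb_pos hlam 0).le hlam.le
  rw [div_le_div_iff₀ (by exact_mod_cast hk) hlam, mul_comm, poissonCdf, mul_sum,
    poissonCdf, sum_range_succ', mul_comm _ (k : ℝ), mul_add, mul_sum]
  refine le_add_of_le_of_nonneg (sum_le_sum fun i hi ↦ ?_) (by positivity [poissonProb_pos hlam 0])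
  rw [← succ_mul_poissonProb_succ]
  have : (i : ℝ) + 1 ≤ k := by exact_mod_cast mem_range.1 hi
  exact mul_le_mul_of_nonneg_right this (poissonProb_pos hlam _).le

/-- `(k + 1) P(W > k) ≤ E[W; W > k] = λ P(W ≥ k)`. -/
lemma one_sub_poissonCdf_succ_div_le (hlam : 0 < lam) (k : ℕ) :
    (1 - poissonCdf lam (k + 1)) / lam ≤ (1 - poissonCdf lam k) / (k + 1) := by
  have htail : ∀ m, Summable fun i ↦ poissonProb lam (i + m) := fun m ↦
    (summable_nat_add_iff m).2 (hasSum_poissonProb hlam.le).summable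
  rw [div_le_div_iff₀ hlam (by positivity), one_sub_poissonCdf hlam.le, one_sub_poissonCdf hlam.le,
    ← tsum_mul_right, ← tsum_mul_right]
  refine ((htail _).mul_right _).tsum_le_tsum (fun i ↦ ?_) ((htail _).mul_right _)
  rw [mul_comm, ← add_assoc, mul_comm _ lam, ← succ_mul_poissonProb_succ]
  push_cast
  exact mul_le_mul_of_nonneg_right (by linarith [i.cast_nonneg (α := ℝ)])
    (poissonProb_pos hlam _).le

lemma poissonMass_univ (hlam : 0 ≤ lam) : poissonMass lam Set.univ = 1 := by
  simp [poissonMass, (hasSum_poissonProb hlam).tsum_eq]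

/-- At `k = 0` the numerator vanishes, and `x / 0 = 0` gives the intended `f 0 = 0`. -/
noncomputable def poissonSteinSolution (lam : ℝ) (A : Set ℕ) (k : ℕ) : ℝ :=
  (∑ j ∈ range k, A.indicator (poissonProb lam) j - poissonMass lam A * poissonCdf lam k) /
    (k * poissonProb lam k)

/-- `poissonSteinKernel lam k j = poissonSteinSolution lam {j} k`. -/
noncomputable def poissonSteinKernel (lam : ℝ) (k j : ℕ) : ℝ :=
  poissonProb lam j * ((if j < k then 1 else 0) - poissonCdf lam k) / (k * poissonProb lam k)

lemma poissonSteinSolution_stein_eq (hlam : 0 < lam) (A : Set ℕ) (k : ℕ) :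
    lam * poissonSteinSolution lam A (k + 1) - k * poissonSteinSolution lam A k
      = A.indicator 1 k - poissonMass lam A := by
  have hp := (poissonProb_pos hlam k).ne'
  have hsucc : lam * poissonSteinSolution lam A (k + 1) =
      (∑ j ∈ range (k + 1), A.indicator (poissonProb lam) j
        - poissonMass lam A * poissonCdf lam (k + 1)) / poissonProb lam k := by
    rw [poissonSteinSolution, Nat.cast_succ, succ_mul_poissonProb_succ]
    field_simp
  have hself : k * poissonSteinSolution lam A k =
      (∑ j ∈ range k, A.indicator (poissonProb lam) j
        - poissonMass lam A * poissonCdf lam k) / poissonProb lam k := by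
    rcases k.eq_zero_or_pos with rfl | hk
    · simp [poissonCdf]
    · rw [poissonSteinSolution]
      field_simp
  rw [hsucc, hself, poissonCdf, sum_range_succ, sum_range_succ, ← poissonCdf]
  by_cases hk : k ∈ A <;> field_simp <;> simp [hk] <;> ring

lemma hasSum_indicator_poissonSteinKernel (hlam : 0 ≤ lam) (A : Set ℕ) (k : ℕ) :
    HasSum (A.indicator (poissonSteinKernel lam k)) (poissonSteinSolution lam A k) := by
  have hkernel : A.indicator (poissonSteinKernel lam k) = fun j ↦
      ((A ∩ Set.Iio k).indicator (poissonProb lam) j - A.indicator (poissonProb lam) j *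
        poissonCdf lam k) / (k * poissonProb lam k) := by
    ext j
    by_cases hA : j ∈ A <;> by_cases hj : j < k <;> simp [poissonSteinKernel, hA, hj, mul_sub]
  have hfin : ∀ j ∉ range k, (A ∩ Set.Iio k).indicator (poissonProb lam) j = 0 := fun j hj ↦
    Set.indicator_of_notMem (fun h ↦ hj (mem_range.2 h.2)) _
  have hhead : HasSum ((A ∩ Set.Iio k).indicator (poissonProb lam))
      (∑ j ∈ range k, A.indicator (poissonProb lam) j) := by
    have hhead_eq : ∀ j ∈ range k, (A ∩ Set.Iio k).indicator (poissonProb lam) j =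
        A.indicator (poissonProb lam) j := fun j hj ↦ by
      rw [Set.inter_comm, ← Set.indicator_indicator,
        Set.indicator_of_mem (Set.mem_Iio.2 (mem_range.1 hj))]
    rw [← sum_congr rfl hhead_eq]
    exact hasSum_sum_of_ne_finset_zero hfin
  have hmass : HasSum (A.indicator (poissonProb lam)) (poissonMass lam A) :=
    ((hasSum_poissonProb hlam).summable.indicator A).hasSum
  rw [hkernel, poissonSteinSolution]
  exact ((hhead.sub (hmass.mul_right _)).div_const _)

lemma hasSum_poissonSteinKernel (hlam : 0 ≤ lam) (k : ℕ) :
    HasSum (poissonSteinKernel lam k) 0 := by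
  simpa [poissonSteinSolution, poissonMass_univ hlam, poissonCdf] using
    hasSum_indicator_poissonSteinKernel hlam Set.univ k

lemma poissonSteinKernel_succ_sub (k j : ℕ) :
    poissonSteinKernel lam (k + 1) j - poissonSteinKernel lam k j =
      poissonProb lam j / poissonProb lam k *
        (((if j < k + 1 then 1 else 0) - poissonCdf lam (k + 1)) / lam
          - ((if j < k then 1 else 0) - poissonCdf lam k) / k) := by
  rw [poissonSteinKernel, poissonSteinKernel, Nat.cast_succ, succ_mul_poissonProb_succ,
    mul_comm lam, mul_comm (k : ℝ), mul_div_mul_comm, mul_div_mul_comm, mul_sub]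

lemma poissonSteinKernel_succ_sub_nonpos (hlam : 0 < lam) {j k : ℕ} (hjk : j ≠ k) :
    poissonSteinKernel lam (k + 1) j - poissonSteinKernel lam k j ≤ 0 := by
  rw [poissonSteinKernel_succ_sub]
  refine mul_nonpos_of_nonneg_of_nonpos
    (div_nonneg (poissonProb_pos hlam j).le (poissonProb_pos hlam k).le) ?_
  rcases lt_or_gt_of_ne hjk with hj | hj
  · have hk : (0 : ℝ) < k := by exact_mod_cast (j.zero_le.trans_lt hj)
    have htail : (1 - poissonCdf lam k) / (k + 1) ≤ (1 - poissonCdf lam k) / k :=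
      div_le_div_of_nonneg_left (by linarith [poissonCdf_le_one hlam k]) hk (by linarith)
    simp only [hj, hj.trans k.lt_succ_self, if_true]
    linarith [one_sub_poissonCdf_succ_div_le hlam k]
  · simp only [not_lt.2 (Nat.succ_le_of_lt hj), not_lt.2 hj.le, if_false, zero_sub, neg_div]
    linarith [poissonCdf_div_le hlam k]

lemma poissonSteinKernel_succ_sub_self_le (hlam : 0 < lam) (k : ℕ) :
    poissonSteinKernel lam (k + 1) k - poissonSteinKernel lam k k ≤ min 1 (1 / lam) := by
  rw [poissonSteinKernel_succ_sub, div_self (poissonProb_pos hlam k).ne', one_mul]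
  simp only [k.lt_succ_self, lt_irrefl, if_true, if_false, zero_sub, neg_div, sub_neg_eq_add]
  have hhead := poissonCdf_div_le hlam k
  have htail := one_sub_poissonCdf_succ_div_le hlam k
  have hF := poissonCdf_nonneg hlam k
  have hF1 := poissonCdf_le_one hlam k
  refine le_min ?_ ?_
  · have h1 : (1 - poissonCdf lam k) / (k + 1) ≤ 1 - poissonCdf lam k :=
      div_le_self (by linarith) (by linarith [k.cast_nonneg (α := ℝ)])
    have h2 : poissonCdf lam k / k ≤ poissonCdf lam k := by
      rw [div_eq_mul_inv]; exact mul_le_of_le_one_right hF (Nat.cast_inv_le_one k)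
    linarith
  · have h : (1 - poissonCdf lam (k + 1)) / lam + poissonCdf lam (k + 1) / lam = 1 / lam := by
      rw [← add_div, sub_add_cancel]
    linarith

lemma abs_poissonSteinSolution_succ_sub_le (hlam : 0 < lam) (A : Set ℕ) (k : ℕ) :
    |poissonSteinSolution lam A (k + 1) - poissonSteinSolution lam A k| ≤ min 1 (1 / lam) := by
  have hd : HasSum (fun j ↦ poissonSteinKernel lam (k + 1) j - poissonSteinKernel lam k j) 0 := by
    simpa using
      (hasSum_poissonSteinKernel hlam.le (k + 1)).sub (hasSum_poissonSteinKernel hlam.le k)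
  have hA := (hasSum_indicator_poissonSteinKernel hlam.le A (k + 1)).sub
    (hasSum_indicator_poissonSteinKernel hlam.le A k)
  rw [← Set.indicator_sub] at hA
  rw [← hA.tsum_eq]
  exact abs_tsum_indicator_le hd (fun j hj ↦ poissonSteinKernel_succ_sub_nonpos hlam hj)
    (poissonSteinKernel_succ_sub_self_le hlam k) A

end Poisson

lemma measureReal_preimage_sub_poissonMass_eq {Ω : Type*} [MeasurableSpace Ω] {μ : Measure Ω}
    [IsProbabilityMeasure μ] {X Xs : Ω → ℕ} (hX : Measurable X) (hXs : Measurable Xs) {n : ℕ}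
    (hXn : ∀ᵐ ω ∂μ, X ω ≤ n) (hXsn : ∀ᵐ ω ∂μ, Xs ω ≤ n) {lam : ℝ} (hlam : 0 < lam)
    (hsb : ∀ y : ℕ, μ.real (Xs ⁻¹' {y}) = y * μ.real (X ⁻¹' {y}) / lam) (A : Set ℕ) :
    μ.real (X ⁻¹' A) - poissonMass lam A = lam *
      ∫ ω, (poissonSteinSolution lam A (X ω + 1) - poissonSteinSolution lam A (Xs ω)) ∂μ := by
  set f := poissonSteinSolution lam A
  have hXint := integrable_comp_of_ae_le hX hXn
  have hXsint := integrable_comp_of_ae_le hXs hXsn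
  have hstein : ∀ ω, A.indicator 1 (X ω) - poissonMass lam A = lam * f (X ω + 1) - X ω * f (X ω) :=
    fun ω ↦ (poissonSteinSolution_stein_eq hlam A (X ω)).symm
  calc μ.real (X ⁻¹' A) - poissonMass lam A
      = ∫ ω, (A.indicator 1 (X ω) - poissonMass lam A) ∂μ := by
        rw [integral_sub (hXint _) (integrable_const _), integral_const,
          measureReal_preimage_eq_integral hX, probReal_univ, one_smul]
    _ = lam * ∫ ω, f (X ω + 1) ∂μ - ∫ ω, (X ω : ℝ) * f (X ω) ∂μ := by
        simp_rw [hstein]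
        rw [integral_sub ((hXint fun y ↦ f (y + 1)).const_mul lam) (hXint fun y ↦ y * f y),
          integral_const_mul]
    _ = lam * ∫ ω, (f (X ω + 1) - f (Xs ω)) ∂μ := by
        rw [integral_mul_comp_eq_of_sizeBias hX hXs hlam.ne' hsb (hXint fun y ↦ y * f y)
          (hXsint f), integral_sub (hXint fun y ↦ f (y + 1)) (hXsint f), mul_sub]

theorem stein_chen_size_bias_bound_general
    {Ω : Type*} [MeasureSpace Ω] [IsProbabilityMeasure (ℙ : Measure Ω)]
    (n : ℕ) (X Xs W : Ω → ℕ)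
    (hX : Measurable X) (hXs : Measurable Xs) (hW : Measurable W)
    (hXn : ∀ ω, X ω ≤ n)
    (lam : ℝ) (hlam0 : 0 < lam)
    (hPoisson : ∀ m : ℕ,
      (ℙ (W ⁻¹' {m})).toReal = Real.exp (-lam) * lam ^ m / (m.factorial : ℝ))
    (hsb : ∀ y : ℕ, (ℙ (Xs ⁻¹' {y})).toReal = (y : ℝ) * (ℙ (X ⁻¹' {y})).toReal / lam)
    (hcoupling : ∀ᵐ ω ∂(ℙ : Measure Ω), Xs ω ≤ X ω + 1) :
    ∀ A : Set ℕ, |(ℙ (X ⁻¹' A)).toReal - (ℙ (W ⁻¹' A)).toReal|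
      ≤ min 1 lam * ∫ ω, ((X ω : ℝ) + 1 - (Xs ω : ℝ)) := by
  intro A
  set f := poissonSteinSolution lam A
  have hXle : ∀ᵐ ω ∂ℙ, X ω ≤ n + 1 := ae_of_all _ fun ω ↦ (hXn ω).trans n.le_succ
  have hXsle : ∀ᵐ ω ∂ℙ, Xs ω ≤ n + 1 := hcoupling.mono fun ω h ↦ h.trans (Nat.succ_le_succ (hXn ω))
  have hW_law : (ℙ : Measure Ω).real (W ⁻¹' A) = poissonMass lam A := by
    rw [measureReal_preimage_eq_tsum hW]
    exact tsum_congr fun y ↦ by simp only [Measure.real, hPoisson]; rfl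
  have hlip : ∀ᵐ ω ∂ℙ, ‖f (X ω + 1) - f (Xs ω)‖ ≤ min 1 (1 / lam) * ((X ω : ℝ) + 1 - Xs ω) :=
    hcoupling.mono fun ω h ↦ by
      simpa using abs_sub_le_mul_of_abs_succ_sub_le (abs_poissonSteinSolution_succ_sub_le hlam0 A) h
  have hbound_int : Integrable (fun ω ↦ min 1 (1 / lam) * ((X ω : ℝ) + 1 - Xs ω)) ℙ :=
    ((integrable_comp_of_ae_le hX hXle fun y ↦ (y : ℝ) + 1).sub
      (integrable_comp_of_ae_le hXs hXsle fun y ↦ (y : ℝ))).const_mul _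
  change |(ℙ : Measure Ω).real (X ⁻¹' A) - (ℙ : Measure Ω).real (W ⁻¹' A)| ≤ _
  calc |(ℙ : Measure Ω).real (X ⁻¹' A) - (ℙ : Measure Ω).real (W ⁻¹' A)|
      = lam * ‖∫ ω, (f (X ω + 1) - f (Xs ω))‖ := by
        rw [hW_law, measureReal_preimage_sub_poissonMass_eq hX hXs hXle hXsle hlam0 hsb, abs_mul,
          abs_of_pos hlam0, Real.norm_eq_abs]
    _ ≤ lam * (min 1 (1 / lam) * ∫ ω, ((X ω : ℝ) + 1 - Xs ω)) := by
        rw [← integral_const_mul]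
        gcongr
        exact norm_integral_le_of_norm_le hbound_int hlip
    _ = min 1 lam * ∫ ω, ((X ω : ℝ) + 1 - Xs ω) := by
        rw [← mul_assoc, mul_min_of_nonneg _ _ hlam0.le, mul_one, mul_one_div_cancel hlam0.ne',
          min_comm]

theorem stein_chen_size_bias_bound
    {Ω : Type*} [MeasureSpace Ω] [IsProbabilityMeasure (ℙ : Measure Ω)]
    (n : ℕ) (X Xs W : Ω → ℕ)
    (hX : Measurable X) (hXs : Measurable Xs) (hW : Measurable W)
    (hXn : ∀ ω, X ω ≤ n) (hXsn : ∀ ω, Xs ω ≤ n)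
    (lam : ℝ) (hlam : lam = ∫ ω, (X ω : ℝ)) (hlam0 : 0 < lam)
    (hPoisson : ∀ m : ℕ,
      (ℙ (W ⁻¹' {m})).toReal = Real.exp (-lam) * lam ^ m / (m.factorial : ℝ))
    (hsb : ∀ y : ℕ, (ℙ (Xs ⁻¹' {y})).toReal = (y : ℝ) * (ℙ (X ⁻¹' {y})).toReal / lam)
    (hcoupling : ∀ᵐ ω ∂(ℙ : Measure Ω), Xs ω ≤ X ω + 1) :
    ∀ A : Set ℕ, |(ℙ (X ⁻¹' A)).toReal - (ℙ (W ⁻¹' A)).toReal|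
      ≤ min 1 lam * ∫ ω, ((X ω : ℝ) + 1 - (Xs ω : ℝ)) :=
  stein_chen_size_bias_bound_general n X Xs W hX hXs hW hXn lam hlam0 hPoisson hsb hcoupling
end
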